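/- arXiv:2411.12945 — 6 statements merged into one kernel-verified Lean document; each statement's English description precedes it below -/
import Mathlib

section
/- A map c : {0,1}^q → ℕ (with q ≥ 2 and c(0,...,0)=0) is the vertex data of some facet-labeled simplicial complex if and only if for every pair of distinct indices i, j ∈ [q], there exists a tuple (a_1,...,a_q) ∈ {0,1}^q with a_i = 1, a_j = 0, and c(a_1,...,a_q) > 0. -/
/-!
Necessity: a vertex of `F i \ F j` has a membership pattern `a` with `a i = 1`, `a j = 0`, and
it is counted by `c a`. Sufficiency: take `c a` vertices of pattern `a` for every `a` and let
`F i` consist of the vertices whose pattern has `i`-th entry `1`; a vertex of a pattern `a`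
with `a i = 1`, `a j = 0` then witnesses `F i ⊄ F j`, and since `q ≥ 2` every `F i` gets one.
-/

open Finset

section MembershipPattern

variable {ι α : Type*} [DecidableEq α]

/-- The vertex data of `F` at `a` is the number of vertices `v` with this pattern equal to `a`. -/
def membershipPattern (F : ι → Finset α) (v : α) : ι → Bool := fun i => decide (v ∈ F i)

lemma forall_mem_iff_iff_membershipPattern_eq (F : ι → Finset α) (v : α) (a : ι → Bool) :
    (∀ i, (v ∈ F i ↔ a i = true)) ↔ membershipPattern F v = a := by
  simp only [funext_iff, membershipPattern]
  refine forall_congr' fun i => ?_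
  cases a i <;> simp

lemma exists_membershipPattern_of_not_subset {F : ι → Finset α} {i j : ι} (h : ¬ F i ⊆ F j) :
    ∃ v, membershipPattern F v i = true ∧ membershipPattern F v j = false := by
  obtain ⟨v, hvi, hvj⟩ := not_subset.mp h
  exact ⟨v, by simpa [membershipPattern], by simpa [membershipPattern]⟩

end MembershipPattern

section FacetsOfPattern

variable {ι α : Type*} [Fintype α]

def facetsOfPattern (pat : α → ι → Bool) (i : ι) : Finset α := {v | pat v i = true}

lemma membershipPattern_facetsOfPattern [DecidableEq α] (pat : α → ι → Bool) :
    membershipPattern (facetsOfPattern pat) = pat := by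
  ext v i
  simp [membershipPattern, facetsOfPattern]

lemma facetsOfPattern_nonempty {pat : α → ι → Bool} {i : ι} {v : α} (hv : pat v i = true) :
    (facetsOfPattern pat i).Nonempty :=
  ⟨v, by simpa [facetsOfPattern]⟩

lemma not_facetsOfPattern_subset {pat : α → ι → Bool} {i j : ι} {v : α}
    (hvi : pat v i = true) (hvj : pat v j = false) :
    ¬ facetsOfPattern pat i ⊆ facetsOfPattern pat j := fun hsub => by
  have := hsub (by simpa [facetsOfPattern] : v ∈ facetsOfPattern pat i)
  simp_all [facetsOfPattern]

end FacetsOfPattern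

section SigmaFst

variable {β α : Type*} (c : β → ℕ)

lemma card_filter_fst_symm_eq [Fintype β] [DecidableEq β] [Fintype α]
    (e : (Σ b, Fin (c b)) ≃ α) (a : β) :
    #{v | (e.symm v).1 = a} = c a := by
  calc #{v | (e.symm v).1 = a}
      = #{x : Σ b, Fin (c b) | x.1 = a} := card_equiv e.symm (by simp)
    _ = c a := by rw [← Fintype.card_subtype, Fintype.card_congr (Equiv.sigmaSubtype a),
        Fintype.card_fin]

lemma exists_fst_symm_eq_of_pos (e : (Σ b, Fin (c b)) ≃ α) {a : β} (ha : 0 < c a) :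
    ∃ v, (e.symm v).1 = a :=
  ⟨e ⟨a, ⟨0, ha⟩⟩, by simp⟩

end SigmaFst

theorem stmt1_general (q : ℕ) (hq : 2 ≤ q) (c : (Fin q → Bool) → ℕ) :
    (∃ (n : ℕ) (F : Fin q → Finset (Fin n)),
      (∀ i, (F i).Nonempty) ∧
      (∀ i j, i ≠ j → ¬ F i ⊆ F j) ∧
      (∀ a : Fin q → Bool,
        c a = (Finset.univ.filter (fun v : Fin n => ∀ i, (v ∈ F i ↔ a i = true))).card)) ↔
    (∀ i j : Fin q, i ≠ j →
      ∃ a : Fin q → Bool, a i = true ∧ a j = false ∧ 0 < c a) := by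
  simp only [forall_mem_iff_iff_membershipPattern_eq]
  constructor
  · rintro ⟨n, F, -, hinc, hc⟩ i j hij
    obtain ⟨v, hvi, hvj⟩ := exists_membershipPattern_of_not_subset (hinc i j hij)
    exact ⟨_, hvi, hvj, hc _ ▸ card_pos.mpr ⟨v, by simp⟩⟩
  · intro h
    let e := Fintype.equivFin (Σ a, Fin (c a))
    let pat : Fin _ → Fin q → Bool := fun v => (e.symm v).1
    have witness : ∀ i j, i ≠ j → ∃ v, pat v i = true ∧ pat v j = false := fun i j hij => by
      obtain ⟨a, hai, haj, hpos⟩ := h i j hij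
      obtain ⟨v, rfl⟩ := exists_fst_symm_eq_of_pos c e hpos
      exact ⟨v, hai, haj⟩
    have : Nontrivial (Fin q) := Fin.nontrivial_iff_two_le.mpr hq
    refine ⟨_, facetsOfPattern pat, fun i => ?_, fun i j hij => ?_, fun a => ?_⟩
    · obtain ⟨j, hji⟩ := exists_ne i
      obtain ⟨v, hvi, -⟩ := witness i j hji.symm
      exact facetsOfPattern_nonempty hvi
    · obtain ⟨v, hvi, hvj⟩ := witness i j hij
      exact not_facetsOfPattern_subset hvi hvj
    · rw [membershipPattern_facetsOfPattern, card_filter_fst_symm_eq c e]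

/-- a map `c : {0,1}^q → ℕ` with `q ≥ 2` and `c(0,…,0) = 0` is the vertex data
of some facet-labeled simplicial complex iff for all distinct `i j` there is a tuple `a`
with `a i = 1`, `a j = 0` and `c a > 0`. -/
theorem stmt1 (q : ℕ) (hq : 2 ≤ q) (c : (Fin q → Bool) → ℕ)
    (h0 : c (fun _ => false) = 0) :
    (∃ (n : ℕ) (F : Fin q → Finset (Fin n)),
      (∀ i, (F i).Nonempty) ∧
      (∀ i j, i ≠ j → ¬ F i ⊆ F j) ∧
      (∀ a : Fin q → Bool,
        c a = (Finset.univ.filter (fun v : Fin n => ∀ i, (v ∈ F i ↔ a i = true))).card)) ↔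
    (∀ i j : Fin q, i ≠ j →
      ∃ a : Fin q → Bool, a i = true ∧ a j = false ∧ 0 < c a) :=
  stmt1_general q hq c
end

section
/- Let K be a clique complex with facets F_1,...,F_n, and let {i_1,...,i_ℓ} ⊆ [n]. Then the set ⋃_{J ⊆ {i_1,...,i_ℓ}, |J| = ℓ−1} (⋂_{k ∈ J} F_k) is a face of K. -/
/-!
Two `(|s| - 1)`-subsets of `s` meet as soon as `|s| ≥ 3`, by pigeonhole. Hence any two vertices
of the union lie in a common facet `F k`, so every edge of the union is a face, and the flag
condition makes the whole union a face.
-/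

open Finset

section

variable {V ι : Type*}

theorem mem_of_forall_pair_mem_face [DecidableEq V] {K : Set (Finset V)}
    (hdown : ∀ s ∈ K, ∀ t ⊆ s, t ∈ K)
    (hflag : ∀ A : Finset V, (∀ a ∈ A, ∀ b ∈ A, ({a, b} : Finset V) ∈ K) → A ∈ K)
    {A : Finset V} (hA : ∀ a ∈ A, ∀ b ∈ A, ∃ σ ∈ K, a ∈ σ ∧ b ∈ σ) : A ∈ K :=
  hflag A fun a ha b hb => by
    obtain ⟨σ, hσ, haσ, hbσ⟩ := hA a ha b hb
    exact hdown σ hσ _ (insert_subset haσ (singleton_subset_iff.2 hbσ))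

theorem Finset.inter_nonempty_of_mem_powersetCard_card_pred [DecidableEq ι] {s J₁ J₂ : Finset ι}
    (hs : 3 ≤ #s) (h₁ : J₁ ∈ s.powersetCard (#s - 1)) (h₂ : J₂ ∈ s.powersetCard (#s - 1)) :
    (J₁ ∩ J₂).Nonempty := by
  rw [mem_powersetCard] at h₁ h₂
  exact inter_nonempty_of_card_lt_card_add_card h₁.1 h₂.1 (by omega)

theorem exists_finset_mem_iff_exists_powersetCard_card_pred (F : ι → Finset V) {s : Finset ι}
    (hs : 2 ≤ #s) :
    ∃ t : Finset V, ∀ v, v ∈ t ↔ ∃ J ∈ s.powersetCard (#s - 1), ∀ k ∈ J, v ∈ F k := by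
  classical
  refine ⟨(s.sup F).filter fun v => ∃ J ∈ s.powersetCard (#s - 1), ∀ k ∈ J, v ∈ F k,
    fun v => ?_⟩
  simp only [mem_filter, and_iff_right_iff_imp]
  rintro ⟨J, hJ, hv⟩
  rw [mem_powersetCard] at hJ
  obtain ⟨k, hk⟩ : J.Nonempty := card_pos.1 (by omega)
  exact mem_sup.2 ⟨k, hJ.1 hk, hv k hk⟩

end

theorem stmt7_general {V : Type*} [DecidableEq V] (n : ℕ) (K : Set (Finset V))
    (hdown : ∀ s ∈ K, ∀ t ⊆ s, t ∈ K)
    (F : Fin n → Finset V)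
    (hfacet : ∀ i, F i ∈ K)
    (hflag : ∀ A : Finset V, (∀ a ∈ A, ∀ b ∈ A, ({a, b} : Finset V) ∈ K) → A ∈ K)
    (s : Finset (Fin n)) (hs : 3 ≤ s.card) :
    ∃ t ∈ K, ∀ v : V,
      v ∈ t ↔ ∃ J ∈ s.powersetCard (s.card - 1), ∀ k ∈ J, v ∈ F k := by
  obtain ⟨t, ht⟩ := exists_finset_mem_iff_exists_powersetCard_card_pred F (by omega : 2 ≤ #s)
  refine ⟨t, mem_of_forall_pair_mem_face hdown hflag fun a ha b hb => ?_, ht⟩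
  obtain ⟨J₁, hJ₁, ha⟩ := (ht a).1 ha
  obtain ⟨J₂, hJ₂, hb⟩ := (ht b).1 hb
  obtain ⟨k, hk⟩ := inter_nonempty_of_mem_powersetCard_card_pred hs hJ₁ hJ₂
  rw [mem_inter] at hk
  exact ⟨F k, hfacet k, ha k hk.1, hb k hk.2⟩

/-- if `K` is a clique (flag) complex with facets `F 1, …, F n` and `s` is a
set of at least three facet indices, then the union over all `(|s|−1)`-element subsets `J`
of `s` of the intersections `⋂_{k ∈ J} F k` is a face of `K`. -/
theorem stmt7 {V : Type*} [DecidableEq V] (n : ℕ) (K : Set (Finset V))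
    (hdown : ∀ s ∈ K, ∀ t ⊆ s, t ∈ K)
    (F : Fin n → Finset V)
    (hfacet : ∀ i, F i ∈ K)
    (hcover : ∀ s ∈ K, ∃ i, s ⊆ F i)
    (hmax : ∀ i, ∀ s ∈ K, F i ⊆ s → s = F i)
    (hflag : ∀ A : Finset V, (∀ a ∈ A, ∀ b ∈ A, ({a, b} : Finset V) ∈ K) → A ∈ K)
    (s : Finset (Fin n)) (hs : 3 ≤ s.card) :
    ∃ t ∈ K, ∀ v : V,
      v ∈ t ↔ ∃ J ∈ s.powersetCard (s.card - 1), ∀ k ∈ J, v ∈ F k :=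
  stmt7_general n K hdown F hfacet hflag s hs
end

section
/- For every fixed k ≥ 3, there exist two non-isomorphic pure clique complexes that have identical intersection data of every degree j ≤ k (i.e., equal values |F_{i_1} ∩ ⋯ ∩ F_{i_j}| under a bijection of facet labels for all j ≤ k) but which are not isomorphic. -/
namespace Stmt9

variable (k : ℕ)

/-! Vertices: type-A vertices encode subsets `L ⊆ Fin (k+1)` (even naturals),
type-B (padding) vertices encode pairs `(i, t)` (odd naturals). -/

def vA (L : Finset (Fin (k+1))) : ℕ := 2 * Encodable.encode L

def vB (i : Fin (k+1)) (t : ℕ) : ℕ := 2 * Encodable.encode (i, t) + 1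

lemma vA_even (L : Finset (Fin (k+1))) : vA k L % 2 = 0 := by simp [vA, Nat.mul_mod_right]

lemma vB_odd (i : Fin (k+1)) (t : ℕ) : vB k i t % 2 = 1 := by
  simp [vB, Nat.add_mod, Nat.mul_mod_right]

lemma vA_inj : Function.Injective (vA k) := fun a b h =>
  Encodable.encode_injective (by unfold vA at h; omega)

lemma vB_inj {i j : Fin (k+1)} {s t : ℕ} (h : vB k i s = vB k j t) : i = j ∧ s = t := by
  have h2 : Encodable.encode (i, s) = Encodable.encode (j, t) := by unfold vB at h; omega
  have := Encodable.encode_injective h2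
  exact ⟨congrArg Prod.fst this, congrArg Prod.snd this⟩

/-! The type-A part of a facet / of an intersection of facets. -/

def afilt (r : ℕ) (S : Finset (Fin (k+1))) : Finset ℕ :=
  (Finset.univ.filter (fun L : Finset (Fin (k+1)) => S ⊆ L ∧ L.card % 2 = r)).image (vA k)

lemma mem_afilt {r : ℕ} {S : Finset (Fin (k+1))} {n : ℕ} :
    n ∈ afilt k r S ↔ ∃ L : Finset (Fin (k+1)), S ⊆ L ∧ L.card % 2 = r ∧ vA k L = n := by
  simp [afilt, Finset.mem_image, Finset.mem_filter, and_assoc]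

lemma afilt_mono {r : ℕ} {S T : Finset (Fin (k+1))} (h : S ⊆ T) :
    afilt k r T ⊆ afilt k r S := by
  intro n hn
  rw [mem_afilt] at hn ⊢
  obtain ⟨L, h1, h2, h3⟩ := hn
  exact ⟨L, h.trans h1, h2, h3⟩

/-- Counting supersets: there are `2^(k+1-|S|)` subsets of `Fin (k+1)` containing `S`. -/
lemma count_superset (S : Finset (Fin (k+1))) :
    (Finset.univ.filter (fun L : Finset (Fin (k+1)) => S ⊆ L)).card = 2 ^ (k + 1 - S.card) := by
  have : (Finset.univ.filter (fun L : Finset (Fin (k+1)) => S ⊆ L)).card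
      = (Sᶜ : Finset (Fin (k+1))).powerset.card := by
    apply Finset.card_bij' (fun L _ => L \ S) (fun M _ => M ∪ S)
    · intro L hL
      simp only [Finset.mem_filter] at hL
      simp only [Finset.mem_powerset]
      intro x hx
      simp only [Finset.mem_sdiff] at hx
      simpa using hx.2
    · intro M hM
      simp only [Finset.mem_powerset] at hM
      simp only [Finset.mem_filter, Finset.mem_univ, true_and]
      exact Finset.subset_union_right
    · intro L hL
      simp only [Finset.mem_filter] at hL
      rw [Finset.sdiff_union_self_eq_union]
      exact (Finset.union_eq_left.mpr hL.2).symm ▸ rfl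
    · intro M hM
      simp only [Finset.mem_powerset] at hM
      apply Finset.union_sdiff_cancel_right
      rw [Finset.disjoint_right]
      intro x hxS hxM
      have := hM hxM
      simp only [Finset.mem_compl] at this
      exact this hxS
  rw [this, Finset.card_powerset, Finset.card_compl, Fintype.card_fin]

/-- The parity-flip involution: equal counts of even- and odd-cardinality supersets. -/
lemma count_parity_eq (S : Finset (Fin (k+1))) (hS : S.card ≤ k) :
    (Finset.univ.filter (fun L : Finset (Fin (k+1)) => S ⊆ L ∧ L.card % 2 = 0)).card =
    (Finset.univ.filter (fun L : Finset (Fin (k+1)) => S ⊆ L ∧ L.card % 2 = 1)).card := by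
  have hcompl : (Sᶜ : Finset (Fin (k+1))).Nonempty := by
    rw [← Finset.card_pos, Finset.card_compl, Fintype.card_fin]; omega
  obtain ⟨j, hjc⟩ := hcompl
  have hj : j ∉ S := by simpa using hjc
  set f : Finset (Fin (k+1)) → Finset (Fin (k+1)) :=
    fun L => if j ∈ L then L.erase j else insert j L with hf
  have key : ∀ L : Finset (Fin (k+1)), S ⊆ L → (S ⊆ f L ∧ (f L).card % 2 = (L.card + 1) % 2
      ∧ f (f L) = L) := by
    intro L hL
    by_cases hjL : j ∈ L
    · have h1 : f L = L.erase j := by simp [hf, hjL]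
      have hcard : (L.erase j).card = L.card - 1 := Finset.card_erase_of_mem hjL
      have hpos : 0 < L.card := Finset.card_pos.mpr ⟨j, hjL⟩
      refine ⟨?_, ?_, ?_⟩
      · rw [h1]
        intro x hx
        exact Finset.mem_erase.mpr ⟨fun h => hj (h ▸ hx), hL hx⟩
      · rw [h1, hcard]; omega
      · rw [h1]
        have hjnot : j ∉ L.erase j := Finset.notMem_erase j L
        simp only [hf, if_neg hjnot]
        exact Finset.insert_erase hjL
    · have h1 : f L = insert j L := by simp [hf, hjL]
      have hcard : (insert j L).card = L.card + 1 := Finset.card_insert_of_notMem hjL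
      refine ⟨?_, ?_, ?_⟩
      · rw [h1]; exact hL.trans (Finset.subset_insert j L)
      · rw [h1, hcard]
      · rw [h1]
        have : j ∈ insert j L := Finset.mem_insert_self j L
        simp only [hf, if_pos this]
        exact Finset.erase_insert hjL
  apply Finset.card_bij' (fun L _ => f L) (fun L _ => f L)
  · intro L hL
    simp only [Finset.mem_filter, Finset.mem_univ, true_and] at hL ⊢
    obtain ⟨h1, h2, _⟩ := key L hL.1
    exact ⟨h1, by omega⟩
  · intro L hL
    simp only [Finset.mem_filter, Finset.mem_univ, true_and] at hL ⊢
    obtain ⟨h1, h2, _⟩ := key L hL.1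
    exact ⟨h1, by omega⟩
  · intro L hL
    simp only [Finset.mem_filter, Finset.mem_univ, true_and] at hL
    exact (key L hL.1).2.2
  · intro L hL
    simp only [Finset.mem_filter, Finset.mem_univ, true_and] at hL
    exact (key L hL.1).2.2

lemma count_parity (S : Finset (Fin (k+1))) (hS : S.card ≤ k) (r : ℕ) (hr : r < 2) :
    (Finset.univ.filter (fun L : Finset (Fin (k+1)) => S ⊆ L ∧ L.card % 2 = r)).card
      = 2 ^ (k - S.card) := by
  have hsplit :
      (Finset.univ.filter (fun L : Finset (Fin (k+1)) => S ⊆ L ∧ L.card % 2 = 0)).card +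
      (Finset.univ.filter (fun L : Finset (Fin (k+1)) => S ⊆ L ∧ L.card % 2 = 1)).card
      = 2 ^ (k + 1 - S.card) := by
    rw [← count_superset k S]
    have e0 : (Finset.univ.filter (fun L : Finset (Fin (k+1)) => S ⊆ L ∧ L.card % 2 = 0))
        = (Finset.univ.filter (fun L : Finset (Fin (k+1)) => S ⊆ L)).filter
            (fun L => L.card % 2 = 0) := by
      rw [Finset.filter_filter]
    have e1 : (Finset.univ.filter (fun L : Finset (Fin (k+1)) => S ⊆ L ∧ L.card % 2 = 1))
        = (Finset.univ.filter (fun L : Finset (Fin (k+1)) => S ⊆ L)).filter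
            (fun L => ¬ (L.card % 2 = 0)) := by
      rw [Finset.filter_filter]
      apply Finset.filter_congr
      intro L _
      constructor
      · rintro ⟨h1, h2⟩; exact ⟨h1, by omega⟩
      · rintro ⟨h1, h2⟩; exact ⟨h1, by omega⟩
    rw [e0, e1]
    exact Finset.card_filter_add_card_filter_not _
  have heq := count_parity_eq k S hS
  have hpow : 2 ^ (k + 1 - S.card) = 2 ^ (k - S.card) + 2 ^ (k - S.card) := by
    have h1 : k + 1 - S.card = (k - S.card) + 1 := by omega
    rw [h1, pow_succ]; ring
  interval_cases r
  · omega
  · omega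

lemma afilt_card {r : ℕ} (hr : r < 2) {S : Finset (Fin (k+1))} (hS : S.card ≤ k) :
    (afilt k r S).card = 2 ^ (k - S.card) := by
  rw [afilt, Finset.card_image_of_injective _ (vA_inj k), count_parity k S hS r hr]

/-! The facet family. Facet indices: `i.castSucc` for the "leaf" facets, `Fin.last (k+1)`
for the "core" facet. -/

def fam (r : ℕ) (i : Fin (k+2)) : Finset ℕ :=
  if h : (i : ℕ) < k + 1 then
    afilt k r {⟨(i : ℕ), h⟩} ∪ (Finset.range (2 ^ (k-1))).image (vB k ⟨(i : ℕ), h⟩)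
  else afilt k r ∅

lemma fam_last (r : ℕ) : fam k r (Fin.last (k+1)) = afilt k r ∅ := by
  rw [fam, dif_neg]
  simp [Fin.last]

lemma fam_castSucc (r : ℕ) (i : Fin (k+1)) :
    fam k r i.castSucc =
      afilt k r {i} ∪ (Finset.range (2 ^ (k-1))).image (vB k i) := by
  have h : ((i.castSucc : Fin (k+2)) : ℕ) < k + 1 := by
    simpa using i.isLt
  rw [fam, dif_pos h]
  have e : (⟨((i.castSucc : Fin (k+2)) : ℕ), h⟩ : Fin (k+1)) = i := Fin.ext (by simp)
  rw [e]

/-- Membership elimination for `fam`. -/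
lemma mem_fam_elim {r n : ℕ} {j : Fin (k+2)} (h : n ∈ fam k r j) :
    (∃ L : Finset (Fin (k+1)), L.card % 2 = r ∧ vA k L = n ∧
        (∀ i : Fin (k+1), j = i.castSucc → i ∈ L)) ∨
    (∃ (i : Fin (k+1)) (t : ℕ), j = i.castSucc ∧ t < 2 ^ (k-1) ∧ vB k i t = n) := by
  rcases Fin.eq_castSucc_or_eq_last j with ⟨i, rfl⟩ | rfl
  · rw [fam_castSucc] at h
    rcases Finset.mem_union.mp h with h1 | h1
    · rw [mem_afilt] at h1
      obtain ⟨L, hSL, hpar, hvA⟩ := h1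
      left
      refine ⟨L, hpar, hvA, ?_⟩
      intro i' hi'
      have he : i' = i := Fin.castSucc_injective _ hi'.symm
      rw [he]
      exact hSL (Finset.mem_singleton_self i)
    · rw [Finset.mem_image] at h1
      obtain ⟨t, ht, hvB⟩ := h1
      right
      exact ⟨i, t, rfl, Finset.mem_range.mp ht, hvB⟩
  · rw [fam_last] at h
    rw [mem_afilt] at h
    obtain ⟨L, _, hpar, hvA⟩ := h
    left
    refine ⟨L, hpar, hvA, ?_⟩
    intro i' hi'
    exfalso
    have hv := congrArg Fin.val hi'
    simp only [Fin.val_last, Fin.coe_castSucc] at hv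
    have := i'.isLt
    omega

lemma disj_parts {r : ℕ} (S : Finset (Fin (k+1))) (i : Fin (k+1)) (m : ℕ) :
    Disjoint (afilt k r S) ((Finset.range m).image (vB k i)) := by
  rw [Finset.disjoint_left]
  intro n hn hn'
  rw [mem_afilt] at hn
  obtain ⟨L, _, _, hvA⟩ := hn
  rw [Finset.mem_image] at hn'
  obtain ⟨t, _, hvB⟩ := hn'
  have h1 := vA_even k L
  have h2 := vB_odd k i t
  omega

/-- Purity: every facet has cardinality `2^k`. -/
lemma fam_card (hk : 1 ≤ k) {r : ℕ} (hr : r < 2) (i : Fin (k+2)) :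
    (fam k r i).card = 2 ^ k := by
  rcases Fin.eq_castSucc_or_eq_last i with ⟨i, rfl⟩ | rfl
  · rw [fam_castSucc, Finset.card_union_of_disjoint (disj_parts k _ _ _)]
    have h1 : (afilt k r {i}).card = 2 ^ (k - 1) := by
      rw [afilt_card k hr (by rw [Finset.card_singleton]; omega), Finset.card_singleton]
    have h2 : ((Finset.range (2 ^ (k-1))).image (vB k i)).card = 2 ^ (k-1) := by
      rw [Finset.card_image_of_injective, Finset.card_range]
      intro s t hst
      exact (vB_inj k hst).2
    rw [h1, h2]
    have hk' : k - 1 + 1 = k := by omega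
    calc 2 ^ (k-1) + 2 ^ (k-1) = 2 ^ (k-1) * 2 := by ring
    _ = 2 ^ (k - 1 + 1) := (pow_succ 2 (k-1)).symm
    _ = 2 ^ k := by rw [hk']
  · rw [fam_last, afilt_card k hr (by simp)]
    simp

/-! Intersections of at least two facets. -/

def preim (S : Finset (Fin (k+2))) : Finset (Fin (k+1)) :=
  Finset.univ.filter (fun j => j.castSucc ∈ S)

lemma preim_card_le (S : Finset (Fin (k+2))) : (preim k S).card ≤ S.card := by
  apply Finset.card_le_card_of_injOn (fun j => j.castSucc)
  · intro j hj
    exact Finset.mem_coe.mpr (Finset.mem_filter.mp (Finset.mem_coe.mp hj)).2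
  · intro a _ b _ h
    exact Fin.castSucc_injective _ h

lemma inf_fam {r : ℕ} (S : Finset (Fin (k+2))) (hS : S.Nonempty) (h2 : 2 ≤ S.card) :
    S.inf' hS (fam k r) = afilt k r (preim k S) := by
  ext n
  rw [Finset.mem_inf']
  constructor
  · intro h
    obtain ⟨a, ha, b, hb, hab⟩ := Finset.one_lt_card.mp h2
    rcases mem_fam_elim k (h a ha) with ⟨L, hpar, hvA, hmem⟩ | ⟨i, t, hj, ht, hvB⟩
    · rw [mem_afilt]
      refine ⟨L, ?_, hpar, hvA⟩
      intro j hj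
      simp only [preim, Finset.mem_filter] at hj
      rcases mem_fam_elim k (h j.castSucc hj.2) with ⟨L', hpar', hvA', hmem'⟩ |
          ⟨i', t', hj', ht', hvB'⟩
      · have : L' = L := vA_inj k (hvA'.trans hvA.symm)
        subst this
        exact hmem' j rfl
      · exfalso
        have e1 := vA_even k L
        have e2 := vB_odd k i' t'
        omega
    · exfalso
      rcases mem_fam_elim k (h b hb) with ⟨L', _, hvA', _⟩ | ⟨i', t', hj', ht', hvB'⟩
      · have e1 := vA_even k L'
        have e2 := vB_odd k i t
        omega
      · have : i = i' := (vB_inj k (hvB.trans hvB'.symm)).1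
        subst this
        exact hab (hj.trans hj'.symm)
  · intro hn j hj
    rcases Fin.eq_castSucc_or_eq_last j with ⟨i, rfl⟩ | rfl
    · rw [fam_castSucc]
      apply Finset.mem_union_left
      refine afilt_mono k ?_ hn
      intro x hx
      rw [Finset.mem_singleton] at hx
      subst hx
      simp only [preim, Finset.mem_filter, Finset.mem_univ, true_and]
      exact hj
    · rw [fam_last]
      exact afilt_mono k (Finset.empty_subset _) hn

/-- Flagness. -/
lemma fam_flag {r : ℕ} (A : Finset ℕ)
    (hA : ∀ a ∈ A, ∀ b ∈ A, ∃ i, ({a, b} : Finset ℕ) ⊆ fam k r i) :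
    ∃ i, A ⊆ fam k r i := by
  by_cases hodd : ∃ a ∈ A, a % 2 = 1
  · obtain ⟨a, ha, hpa⟩ := hodd
    obtain ⟨j, hj⟩ := hA a ha a ha
    have haj : a ∈ fam k r j := hj (by simp)
    rcases mem_fam_elim k haj with ⟨L, _, hvA, _⟩ | ⟨i, t, hji, ht, hvB⟩
    · exfalso; have := vA_even k L; omega
    · refine ⟨i.castSucc, ?_⟩
      intro b hb
      obtain ⟨m, hm⟩ := hA a ha b hb
      have ham : a ∈ fam k r m := hm (by simp)
      have hbm : b ∈ fam k r m := hm (by simp)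
      rcases mem_fam_elim k ham with ⟨L, _, hvA, _⟩ | ⟨i', t', hmi', ht', hvB'⟩
      · exfalso; have := vA_even k L; omega
      · have : i' = i := (vB_inj k (hvB'.trans hvB.symm)).1
        subst this
        rw [← hmi']
        exact hbm
  · refine ⟨Fin.last (k+1), ?_⟩
    intro b hb
    obtain ⟨m, hm⟩ := hA b hb b hb
    have hbm : b ∈ fam k r m := hm (by simp)
    rcases mem_fam_elim k hbm with ⟨L, hpar, hvA, _⟩ | ⟨i, t, _, _, hvB⟩
    · rw [fam_last, mem_afilt]
      exact ⟨L, Finset.empty_subset _, hpar, hvA⟩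
    · exfalso
      apply hodd
      refine ⟨b, hb, ?_⟩
      have := vB_odd k i t
      omega

/-- No facet is contained in another. -/
lemma fam_not_subset (hk : 3 ≤ k) {r : ℕ} (hr : r < 2) {i j : Fin (k+2)} (hij : i ≠ j) :
    ¬ fam k r i ⊆ fam k r j := by
  intro hsub
  rcases Fin.eq_castSucc_or_eq_last i with ⟨ii, rfl⟩ | rfl
  · -- witness: the padding vertex `vB ii 0`
    have hwit : vB k ii 0 ∈ fam k r ii.castSucc := by
      rw [fam_castSucc]
      apply Finset.mem_union_right
      exact Finset.mem_image_of_mem _ (Finset.mem_range.mpr (by positivity))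
    have hw2 := hsub hwit
    rcases mem_fam_elim k hw2 with ⟨L, _, hvA, _⟩ | ⟨i', t', hji', _, hvB'⟩
    · have e1 := vA_even k L; have e2 := vB_odd k ii 0; omega
    · obtain ⟨rfl, -⟩ := vB_inj k hvB'.symm
      exact hij hji'.symm
  · -- i = last: witness is a type-A vertex avoiding the leaf of `j`
    rcases Fin.eq_castSucc_or_eq_last j with ⟨jj, rfl⟩ | rfl
    · -- choose L with jj ∉ L and L.card % 2 = r
      obtain ⟨L, hjjL, hpar⟩ :
          ∃ L : Finset (Fin (k+1)), jj ∉ L ∧ L.card % 2 = r := by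
        interval_cases r
        · exact ⟨∅, by simp, by simp⟩
        · by_cases h0 : (jj : ℕ) = 0
          · refine ⟨{(⟨1, by omega⟩ : Fin (k+1))}, ?_, by simp⟩
            rw [Finset.mem_singleton]
            intro hcon
            have := congrArg Fin.val hcon
            simp at this
            omega
          · refine ⟨{(⟨0, by omega⟩ : Fin (k+1))}, ?_, by simp⟩
            rw [Finset.mem_singleton]
            intro hcon
            have := congrArg Fin.val hcon
            simp at this
            exact h0 (by simp [this])
      have hwit : vA k L ∈ fam k r (Fin.last (k+1)) := by
        rw [fam_last, mem_afilt]
        exact ⟨L, Finset.empty_subset _, hpar, rfl⟩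
      have hw2 := hsub hwit
      rcases mem_fam_elim k hw2 with ⟨L', _, hvA', hmem'⟩ | ⟨i', t', _, _, hvB'⟩
      · have : L' = L := vA_inj k hvA'
        subst this
        exact hjjL (hmem' jj rfl)
      · have e1 := vA_even k L; have e2 := vB_odd k i' t'; omega
    · exact hij rfl

/-- The full-label vertex lies in every facet of the `(k+1) % 2` family. -/
lemma vfull_mem (j : Fin (k+2)) : vA k Finset.univ ∈ fam k ((k+1) % 2) j := by
  have hpar : (Finset.univ : Finset (Fin (k+1))).card % 2 = (k+1) % 2 := by
    rw [Finset.card_univ, Fintype.card_fin]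
  rcases Fin.eq_castSucc_or_eq_last j with ⟨i, rfl⟩ | rfl
  · rw [fam_castSucc]
    apply Finset.mem_union_left
    rw [mem_afilt]
    exact ⟨Finset.univ, Finset.subset_univ _, hpar, rfl⟩
  · rw [fam_last, mem_afilt]
    exact ⟨Finset.univ, Finset.empty_subset _, hpar, rfl⟩

/-- No vertex lies in every facet of the `k % 2` family. -/
lemma no_common (g : ℕ) (hg : ∀ j : Fin (k+2), g ∈ fam k (k % 2) j) : False := by
  rcases mem_fam_elim k (hg (Fin.last (k+1))) with ⟨L, hpar, hvA, _⟩ | ⟨i, t, hj, _, _⟩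
  · have hLuniv : L = Finset.univ := by
      apply Finset.eq_univ_of_forall
      intro i
      rcases mem_fam_elim k (hg i.castSucc) with ⟨L', hpar', hvA', hmem'⟩ |
          ⟨i', t', _, _, hvB'⟩
      · have : L' = L := vA_inj k (hvA'.trans hvA.symm)
        subst this
        exact hmem' i rfl
      · exfalso
        have e1 := vA_even k L
        have e2 := vB_odd k i' t'
        omega
    rw [hLuniv, Finset.card_univ, Fintype.card_fin] at hpar
    omega
  · have hv := congrArg Fin.val hj
    simp only [Fin.val_last, Fin.coe_castSucc] at hv
    have := i.isLt
    omega

end Stmt9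

/-- for every `k ≥ 3` there are two pure clique complexes (given by their
facet lists `F`, `G` on vertex set `ℕ`, generating downward-closed flag complexes) that
have identical intersection data of every degree `j ≤ k` but are not isomorphic. -/
theorem stmt9 (k : ℕ) (hk : 3 ≤ k) :
    ∃ (p q : ℕ) (F G : Fin q → Finset ℕ),
      -- distinct facets, none contained in another (so each `F i` really is a facet)
      (∀ i j, i ≠ j → ¬ F i ⊆ F j) ∧
      (∀ i j, i ≠ j → ¬ G i ⊆ G j) ∧
      -- purity: all facets have cardinality p
      (∀ i, (F i).card = p) ∧ (∀ i, (G i).card = p) ∧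
      -- both generated complexes are clique (flag) complexes
      (∀ A : Finset ℕ,
        (∀ a ∈ A, ∀ b ∈ A, ∃ i, ({a, b} : Finset ℕ) ⊆ F i) → ∃ i, A ⊆ F i) ∧
      (∀ A : Finset ℕ,
        (∀ a ∈ A, ∀ b ∈ A, ∃ i, ({a, b} : Finset ℕ) ⊆ G i) → ∃ i, A ⊆ G i) ∧
      -- identical intersection data in every degree `j ≤ k`
      (∀ (S : Finset (Fin q)) (hS : S.Nonempty), S.card ≤ k →
        (S.inf' hS F).card = (S.inf' hS G).card) ∧
      -- not isomorphic: no vertex bijection matching the facets up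
      ¬ ∃ (φ : ℕ → ℕ) (σ : Fin q ≃ Fin q),
          Set.InjOn φ (⋃ i, (F i : Set ℕ)) ∧ ∀ i, (F i).image φ = G (σ i) := by
  classical
  refine ⟨2 ^ k, k + 2, Stmt9.fam k ((k+1) % 2), Stmt9.fam k (k % 2),
    ?_, ?_, ?_, ?_, ?_, ?_, ?_, ?_⟩
  · exact fun i j hij => Stmt9.fam_not_subset k hk (by omega) hij
  · exact fun i j hij => Stmt9.fam_not_subset k hk (by omega) hij
  · exact fun i => Stmt9.fam_card k (by omega) (by omega) i
  · exact fun i => Stmt9.fam_card k (by omega) (by omega) i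
  · exact fun A hA => Stmt9.fam_flag k A hA
  · exact fun A hA => Stmt9.fam_flag k A hA
  · intro S hS hcard
    by_cases h1 : S.card = 1
    · obtain ⟨j, rfl⟩ := Finset.card_eq_one.mp h1
      rw [Finset.inf'_singleton, Finset.inf'_singleton,
        Stmt9.fam_card k (by omega) (by omega), Stmt9.fam_card k (by omega) (by omega)]
    · have h2 : 2 ≤ S.card := by
        have := Finset.card_pos.mpr hS
        omega
      have hp : (Stmt9.preim k S).card ≤ k := (Stmt9.preim_card_le k S).trans hcard
      rw [Stmt9.inf_fam k S hS h2, Stmt9.inf_fam k S hS h2,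
        Stmt9.afilt_card k (by omega) hp, Stmt9.afilt_card k (by omega) hp]
  · rintro ⟨φ, σ, hinj, him⟩
    apply Stmt9.no_common k (φ (Stmt9.vA k Finset.univ))
    intro j
    have h1 := him (σ.symm j)
    rw [Equiv.apply_symm_apply] at h1
    rw [← h1]
    exact Finset.mem_image_of_mem φ (Stmt9.vfull_mem k (σ.symm j))
end

section
/- Let K and K' be the simplicial complexes on disjoint vertex copies with facets K = {{1,2,4,5},{1,3,6,7},{2,3,8,9},{1,2,3,10}} and K' = {{1,2,5,6},{1,3,7,8},{1,4,9,10},{1,2,3,4}}. Then K and K' are both 4-pure clique complexes with the same facet-adjacency matrix (in some ordering of facets), but K and K' are not isomorphic. -/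
/-!
Flagness: in each complex any two distinct facets meet inside the last facet, so a vertex
outside the last facet lies in exactly one facet, and a set of pairwise adjacent vertices
containing such a vertex lies in that facet.

Non-isomorphism: vertex `1` of `K'` lies in every facet, and an isomorphism is injective,
so it would pull back to a vertex common to all facets of `K`, but `K` has none.
-/

theorem exists_subset_of_inter_subset {α ι : Type*} [DecidableEq α] (F : ι → Finset α) (k : ι)
    (hF : ∀ i j, i ≠ j → F i ∩ F j ⊆ F k) (A : Finset α)
    (hA : ∀ a ∈ A, ∀ b ∈ A, ∃ i, ({a, b} : Finset α) ⊆ F i) : ∃ i, A ⊆ F i := by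
  by_cases hAk : A ⊆ F k
  · exact ⟨k, hAk⟩
  obtain ⟨v, hvA, hvk⟩ := Finset.not_subset.1 hAk
  obtain ⟨i, hvi⟩ := hA v hvA v hvA
  refine ⟨i, fun b hbA => ?_⟩
  obtain ⟨j, hvbj⟩ := hA v hvA b hbA
  have hji : j = i := by
    by_contra hne
    exact hvk (hF j i hne (Finset.mem_inter.2 ⟨hvbj (by simp), hvi (by simp)⟩))
  exact hji ▸ hvbj (by simp)

theorem exists_forall_mem_of_injOn {α β ι : Type*} [DecidableEq β] [Nonempty ι]
    {F : ι → Finset α} {φ : α → β} (hinj : Set.InjOn φ (⋃ i, (F i : Set α))) {w : β}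
    (hw : ∀ i, w ∈ (F i).image φ) : ∃ a, ∀ i, a ∈ F i := by
  choose a haF hφa using fun i => Finset.mem_image.1 (hw i)
  obtain ⟨i₀⟩ := ‹Nonempty ι›
  refine ⟨a i₀, fun i => ?_⟩
  have hai : a i = a i₀ :=
    hinj (Set.mem_iUnion.2 ⟨i, haF i⟩) (Set.mem_iUnion.2 ⟨i₀, haF i₀⟩) ((hφa i).trans (hφa i₀).symm)
  exact hai ▸ haF i

/-- the two concrete complexes with facets
`K = {{1,2,4,5},{1,3,6,7},{2,3,8,9},{1,2,3,10}}` and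
`K' = {{1,2,5,6},{1,3,7,8},{1,4,9,10},{1,2,3,4}}` are both 4-pure clique complexes with
the same facet-adjacency matrix (for some ordering of facets), yet they are not isomorphic. -/
theorem stmt10 (F G : Fin 4 → Finset ℕ)
    (hF : F = ![{1,2,4,5}, {1,3,6,7}, {2,3,8,9}, {1,2,3,10}])
    (hG : G = ![{1,2,5,6}, {1,3,7,8}, {1,4,9,10}, {1,2,3,4}]) :
    -- 4-pure
    (∀ i, (F i).card = 4) ∧ (∀ i, (G i).card = 4) ∧
    -- both generated complexes are clique (flag) complexes
    (∀ A : Finset ℕ,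
      (∀ a ∈ A, ∀ b ∈ A, ∃ i, ({a, b} : Finset ℕ) ⊆ F i) → ∃ i, A ⊆ F i) ∧
    (∀ A : Finset ℕ,
      (∀ a ∈ A, ∀ b ∈ A, ∃ i, ({a, b} : Finset ℕ) ⊆ G i) → ∃ i, A ⊆ G i) ∧
    -- same facet-adjacency matrix, in some ordering of the facets
    (∃ σ : Fin 4 ≃ Fin 4, ∀ i j, (F i ∩ F j).card = (G (σ i) ∩ G (σ j)).card) ∧
    -- not isomorphic
    ¬ ∃ (φ : ℕ → ℕ) (σ : Fin 4 ≃ Fin 4),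
        Set.InjOn φ (⋃ i, (F i : Set ℕ)) ∧ ∀ i, (F i).image φ = G (σ i) := by
  have hcone : ∀ j, 1 ∈ G j := by subst hG; decide
  have hempty : F 0 ∩ F 1 ∩ F 2 = ∅ := by subst hF; decide
  refine ⟨by subst hF; decide, by subst hG; decide,
    exists_subset_of_inter_subset F 3 (by subst hF; decide),
    exists_subset_of_inter_subset G 3 (by subst hG; decide),
    ⟨Equiv.refl _, by subst hF hG; decide⟩, ?_⟩
  rintro ⟨φ, σ, hinj, hmap⟩
  obtain ⟨a, ha⟩ := exists_forall_mem_of_injOn hinj fun i => hmap i ▸ hcone (σ i)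
  simpa [hempty] using Finset.mem_inter.2 ⟨Finset.mem_inter.2 ⟨ha 0, ha 1⟩, ha 2⟩
end

section
/- Let S be a finite family of sets such that no three members have triangle intersection. Then for any three distinct members F_1, F_2, F_3 of S, |F_1 ∩ F_2 ∩ F_3| = min(|F_1 ∩ F_2|, |F_1 ∩ F_3|, |F_2 ∩ F_3|). -/
open Finset

namespace Finset

variable {α : Type*} [DecidableEq α]

def HasTriangleIntersection (A B C : Finset α) : Prop :=
  ((B ∩ C) \ A).Nonempty ∧ ((A ∩ C) \ B).Nonempty ∧ ((A ∩ B) \ C).Nonempty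

theorem not_hasTriangleIntersection_iff {A B C : Finset α} :
    ¬ HasTriangleIntersection A B C ↔ B ∩ C ⊆ A ∨ A ∩ C ⊆ B ∨ A ∩ B ⊆ C := by
  simp only [HasTriangleIntersection, not_and_or, not_nonempty_iff_eq_empty,
    sdiff_eq_empty_iff_subset]

/-- Without triangle intersection some pairwise intersection lies in the third set, so it *is*
the triple intersection; since the triple intersection lies in every pairwise one, that pairwise
intersection is the smallest. -/
theorem card_inter_inter_eq_min_of_not_hasTriangleIntersection {A B C : Finset α}
    (h : ¬ HasTriangleIntersection A B C) :
    #(A ∩ B ∩ C) = min (min #(A ∩ B) #(A ∩ C)) #(B ∩ C) := by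
  have hAB : #(A ∩ B ∩ C) ≤ #(A ∩ B) := card_le_card inter_subset_left
  have hAC : #(A ∩ B ∩ C) ≤ #(A ∩ C) := card_le_card (inter_subset_inter_right inter_subset_left)
  have hBC : #(A ∩ B ∩ C) ≤ #(B ∩ C) :=
    card_le_card (inter_subset_inter_right inter_subset_right)
  have hcases : #(A ∩ B ∩ C) = #(B ∩ C) ∨ #(A ∩ B ∩ C) = #(A ∩ C) ∨
      #(A ∩ B ∩ C) = #(A ∩ B) := by
    rcases not_hasTriangleIntersection_iff.mp h with hBC_A | hAC_B | hAB_C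
    · rw [inter_assoc, inter_eq_right.mpr hBC_A]; left; rfl
    · rw [inter_right_comm, inter_eq_left.mpr hAC_B]; right; left; rfl
    · rw [inter_eq_left.mpr hAB_C]; right; right; rfl
  omega

end Finset

theorem stmt12_general {α : Type*} [DecidableEq α] (S : Finset (Finset α))
    (htri : ∀ A ∈ S, ∀ B ∈ S, ∀ C ∈ S,
      ¬ (((B ∩ C) \ A).Nonempty ∧ ((A ∩ C) \ B).Nonempty ∧ ((A ∩ B) \ C).Nonempty))
    (F₁ F₂ F₃ : Finset α) (h1 : F₁ ∈ S) (h2 : F₂ ∈ S) (h3 : F₃ ∈ S) :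
    (F₁ ∩ F₂ ∩ F₃).card =
      min (min (F₁ ∩ F₂).card (F₁ ∩ F₃).card) (F₂ ∩ F₃).card :=
  card_inter_inter_eq_min_of_not_hasTriangleIntersection (htri F₁ h1 F₂ h2 F₃ h3)

/-- if `S` is a finite family of finite sets no three members of which have
triangle intersection, then for any three distinct members `F₁ F₂ F₃` of `S`,
`|F₁ ∩ F₂ ∩ F₃| = min (|F₁ ∩ F₂|, |F₁ ∩ F₃|, |F₂ ∩ F₃|)`. -/
theorem stmt12 {α : Type*} [DecidableEq α] (S : Finset (Finset α))
    (htri : ∀ A ∈ S, ∀ B ∈ S, ∀ C ∈ S,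
      ¬ (((B ∩ C) \ A).Nonempty ∧ ((A ∩ C) \ B).Nonempty ∧ ((A ∩ B) \ C).Nonempty))
    (F₁ F₂ F₃ : Finset α) (h1 : F₁ ∈ S) (h2 : F₂ ∈ S) (h3 : F₃ ∈ S)
    (h12 : F₁ ≠ F₂) (h13 : F₁ ≠ F₃) (h23 : F₂ ≠ F₃) :
    (F₁ ∩ F₂ ∩ F₃).card =
      min (min (F₁ ∩ F₂).card (F₁ ∩ F₃).card) (F₂ ∩ F₃).card :=
  stmt12_general S htri F₁ F₂ F₃ h1 h2 h3
end

section
/- Let t(p,q) be the number of sequences (F_1,...,F_q) of q distinct p-element subsets of some initial segment [n] whose union is [n] (over all n), i.e., t(p,q) = q! · s_v(p,q). Let f(p,j) be the number of j×m 0-1 matrices with exactly p ones per row and no zero column (over all m). Then f(p,q) = ∑_{j=0}^{q} S(q,j) · t(p,j), where S(q,j) are Stirling numbers of the second kind. -/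
/-- The number of alignments of `j` strips of length `p` (see statement 17). -/
noncomputable def numAlignments (p j : ℕ) : ℕ :=
  Set.ncard {M : (m : ℕ) × (Fin j → Fin m → Bool) |
    (∀ r, (Finset.univ.filter (fun c => M.2 r c = true)).card = p) ∧
    ∀ c, ∃ r, M.2 r c = true}

/-- `t(p,j)`: the number of sequences of `j` distinct `p`-element subsets of an initial
segment `[n]` whose union is all of `[n]`, over all `n` (i.e. `q!·s_v(p,q)`,
labeled-facet pure complexes). -/
noncomputable def numLabeledPure (p j : ℕ) : ℕ :=
  Set.ncard {x : (n : ℕ) × (Fin j → Finset (Fin n)) |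
    Function.Injective x.2 ∧ (∀ i, (x.2 i).card = p) ∧ ∀ v, ∃ i, v ∈ x.2 i}

/-- Stirling numbers of the second kind. -/
def stirling2 : ℕ → ℕ → ℕ
  | 0, 0 => 1
  | 0, _ + 1 => 0
  | _ + 1, 0 => 0
  | n + 1, k + 1 => (k + 1) * stirling2 n (k + 1) + stirling2 n k

open Finset Function Nat

lemma stirling2_eq_zero_of_lt : ∀ {q j : ℕ}, q < j → stirling2 q j = 0
  | 0, _ + 1, _ => rfl
  | q + 1, j + 1, h => by
    have h1 : q < j + 1 := by omega
    have h2 : q < j := by omega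
    simp [stirling2, stirling2_eq_zero_of_lt h1, stirling2_eq_zero_of_lt h2]

/-- Splitting a subtype count along a decidable-or-not predicate. -/
lemma nat_card_subtype_split {γ : Type*} [Finite γ] (C D : γ → Prop) :
    Nat.card {x // C x} = Nat.card {x // C x ∧ D x} + Nat.card {x // C x ∧ ¬ D x} := by
  classical
  rw [← Nat.card_sum]
  refine Nat.card_congr ?_
  exact ((Equiv.sumCongr (Equiv.subtypeSubtypeEquivSubtypeInter C D)
      (Equiv.subtypeSubtypeEquivSubtypeInter C (fun x => ¬ D x))).symm.trans
    (Equiv.sumCompl (fun x : {y // C y} => D x.1))).symm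

/-- Surjectivity of `Fin.cons b g` unfolded. -/
lemma surjective_cons_iff {q : ℕ} {β : Type*} (b : β) (g : Fin q → β) :
    Surjective (Fin.cons b g : Fin (q + 1) → β) ↔ ∀ x, x = b ∨ ∃ i, g i = x := by
  constructor
  · intro hs x
    obtain ⟨j, hj⟩ := hs x
    rcases Fin.eq_zero_or_eq_succ j with rfl | ⟨i, rfl⟩
    · left; rw [← hj]; rfl
    · right; exact ⟨i, by rw [← hj]; simp⟩
  · intro h x
    rcases h x with rfl | ⟨i, hi⟩
    · exact ⟨0, rfl⟩
    · exact ⟨i.succ, by simp [hi]⟩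

/-- Functions missing exactly the value `b` correspond to surjections onto the complement. -/
def missEquiv {q : ℕ} {β : Type*} (b : β) :
    {g : Fin q → β // (∀ x, x = b ∨ ∃ i, g i = x) ∧ ¬ ∃ i, g i = b} ≃
      {h : Fin q → {x : β // x ≠ b} // Surjective h} where
  toFun g := ⟨fun i => ⟨g.1 i, fun hh => g.2.2 ⟨i, hh⟩⟩, by
    rintro ⟨x, hx⟩
    rcases g.2.1 x with h | ⟨i, hi⟩
    · exact absurd h hx
    · exact ⟨i, Subtype.ext hi⟩⟩
  invFun h := ⟨fun i => (h.1 i).1, ⟨fun x => by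
      by_cases hx : x = b
      · exact Or.inl hx
      · rcases h.2 ⟨x, hx⟩ with ⟨i, hi⟩
        exact Or.inr ⟨i, congrArg Subtype.val hi⟩,
    by rintro ⟨i, hi⟩; exact (h.1 i).2 hi⟩⟩
  left_inv g := rfl
  right_inv h := rfl

universe u

/-- The number of surjections from `Fin q` onto a finite type. -/
lemma card_surj : ∀ (q : ℕ) (β : Type u) [Fintype β],
    Nat.card {f : Fin q → β // Surjective f}
      = (Fintype.card β)! * stirling2 q (Fintype.card β) := by
  intro q
  induction q with
  | zero =>
    intro β _
    rcases isEmpty_or_nonempty β with h | h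
    · haveI : Unique {f : Fin 0 → β // Surjective f} :=
        ⟨⟨⟨fun i => i.elim0, fun b => isEmptyElim b⟩⟩,
          fun f => Subtype.ext (funext fun i => i.elim0)⟩
      rw [Nat.card_unique, Fintype.card_eq_zero]
      simp [stirling2]
    · haveI : IsEmpty {f : Fin 0 → β // Surjective f} := by
        refine ⟨fun f => ?_⟩
        obtain ⟨b⟩ := h
        obtain ⟨i, _⟩ := f.2 b
        exact i.elim0
      obtain ⟨k, hk⟩ : ∃ k, Fintype.card β = k + 1 :=
        ⟨_, (Nat.succ_pred_eq_of_pos Fintype.card_pos).symm⟩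
      rw [Nat.card_of_isEmpty, hk]
      simp [stirling2]
  | succ q ih =>
    intro β _
    classical
    rcases isEmpty_or_nonempty β with hβ | hβ
    · haveI : IsEmpty {f : Fin (q + 1) → β // Surjective f} :=
        ⟨fun f => isEmptyElim (f.1 0)⟩
      rw [Nat.card_of_isEmpty, Fintype.card_eq_zero]
      simp [stirling2]
    · obtain ⟨k, hk⟩ : ∃ k, Fintype.card β = k + 1 :=
        ⟨_, (Nat.succ_pred_eq_of_pos Fintype.card_pos).symm⟩
      -- decompose along the value at 0
      have e1 : {f : Fin (q + 1) → β // Surjective f} ≃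
          Σ b : β, {g : Fin q → β // Surjective (Fin.cons b g : Fin (q + 1) → β)} := by
        refine (Equiv.subtypeEquiv (Fin.consEquiv (fun _ : Fin (q + 1) => β)).symm (fun f => ?_)).trans
          (Equiv.subtypeProdEquivSigmaSubtype
            (fun b (g : Fin q → β) => Surjective (Fin.cons b g : Fin (q + 1) → β)))
        constructor
        · intro hf
          have : (Fin.cons (f 0) (fun i => f i.succ) : Fin (q + 1) → β) = f := by
            funext i
            exact Fin.cases rfl (fun i => rfl) i
          simpa [Fin.consEquiv, this] using hf
        · intro hf
          have : (Fin.cons (f 0) (fun i => f i.succ) : Fin (q + 1) → β) = f := by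
            funext i
            exact Fin.cases rfl (fun i => rfl) i
          simpa [Fin.consEquiv, this] using hf
      rw [Nat.card_congr e1, Nat.card_eq_fintype_card, Fintype.card_sigma]
      have hterm : ∀ b : β,
          Fintype.card {g : Fin q → β // Surjective (Fin.cons b g : Fin (q + 1) → β)} =
            (k + 1)! * stirling2 q (k + 1) + k ! * stirling2 q k := by
        intro b
        rw [← Nat.card_eq_fintype_card]
        have e2 : {g : Fin q → β // Surjective (Fin.cons b g : Fin (q + 1) → β)} ≃
            {g : Fin q → β // ∀ x, x = b ∨ ∃ i, g i = x} :=
          Equiv.subtypeEquivRight (fun g => surjective_cons_iff b g)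
        rw [Nat.card_congr e2,
          nat_card_subtype_split (fun g : Fin q → β => ∀ x, x = b ∨ ∃ i, g i = x)
            (fun g => ∃ i, g i = b)]
        have c1 : Nat.card {g : Fin q → β //
            (∀ x, x = b ∨ ∃ i, g i = x) ∧ ∃ i, g i = b} = (k + 1)! * stirling2 q (k + 1) := by
          have e3 : {g : Fin q → β // (∀ x, x = b ∨ ∃ i, g i = x) ∧ ∃ i, g i = b} ≃
              {g : Fin q → β // Surjective g} := by
            refine Equiv.subtypeEquivRight (fun g => ?_)
            constructor
            · rintro ⟨h1, h2⟩ x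
              rcases h1 x with rfl | h
              · exact h2
              · exact h
            · intro hg
              exact ⟨fun x => Or.inr (hg x), hg b⟩
          rw [Nat.card_congr e3, ih β, hk]
        have c2 : Nat.card {g : Fin q → β //
            (∀ x, x = b ∨ ∃ i, g i = x) ∧ ¬ ∃ i, g i = b} = k ! * stirling2 q k := by
          rw [Nat.card_congr (missEquiv b), ih {x : β // x ≠ b}]
          have : Fintype.card {x : β // x ≠ b} = k := by
            have := Fintype.card_subtype_compl (fun x : β => x = b)
            rw [Fintype.card_subtype_eq b, hk] at this
            simpa using this
          rw [this]
        rw [c1, c2]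
      rw [Finset.sum_congr rfl (fun b _ => hterm b), Finset.sum_const, Finset.card_univ, hk,
        smul_eq_mul]
      have : stirling2 (q + 1) (k + 1) = (k + 1) * stirling2 q (k + 1) + stirling2 q k := rfl
      rw [this, Nat.factorial_succ]
      ring

/-- Fibering a subtype over the value of a map. -/
def fiberEquiv {γ κ : Type*} (F : γ → κ) (P : γ → Prop) :
    (Σ k : κ, {x // P x ∧ F x = k}) ≃ {x // P x} where
  toFun x := ⟨x.2.1, x.2.2.1⟩
  invFun x := ⟨F x.1, ⟨x.1, x.2, rfl⟩⟩
  left_inv := by rintro ⟨k, x, hx, rfl⟩; rfl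
  right_inv x := rfl

lemma nat_card_fiber_sum {γ κ : Type*} [Fintype γ] [Fintype κ] (F : γ → κ) (P : γ → Prop) :
    Nat.card {x // P x} = ∑ k : κ, Nat.card {x // P x ∧ F x = k} := by
  classical
  rw [← Nat.card_congr (fiberEquiv F P), Nat.card_eq_fintype_card, Fintype.card_sigma]
  exact Finset.sum_congr rfl fun k _ => (Nat.card_eq_fintype_card).symm

/-- Functions `Fin q → α` with image exactly `B`. -/
def imageEquiv {q : ℕ} {α : Type*} [DecidableEq α] (B : Finset α) :
    {f : Fin q → α // Finset.image f Finset.univ = B} ≃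
      {h : Fin q → {x : α // x ∈ B} // Surjective h} where
  toFun f := ⟨fun i => ⟨f.1 i, by
      have : f.1 i ∈ Finset.image f.1 Finset.univ :=
        Finset.mem_image_of_mem _ (Finset.mem_univ i)
      rwa [f.2] at this⟩, by
    rintro ⟨x, hx⟩
    rw [← f.2] at hx
    rcases Finset.mem_image.1 hx with ⟨i, _, hi⟩
    exact ⟨i, Subtype.ext hi⟩⟩
  invFun h := ⟨fun i => (h.1 i).1, by
    ext x
    simp only [Finset.mem_image, Finset.mem_univ, true_and]
    constructor
    · rintro ⟨i, rfl⟩; exact (h.1 i).2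
    · intro hx
      rcases h.2 ⟨x, hx⟩ with ⟨i, hi⟩
      exact ⟨i, congrArg Subtype.val hi⟩⟩
  left_inv f := rfl
  right_inv h := rfl

lemma card_image_fiber {q : ℕ} {α : Type*} [Fintype α] [DecidableEq α] (B : Finset α) :
    Nat.card {f : Fin q → α // Finset.image f Finset.univ = B}
      = B.card ! * stirling2 q B.card := by
  rw [Nat.card_congr (imageEquiv B), card_surj q {x : α // x ∈ B}, Fintype.card_coe]

/-- Injective functions `Fin j → α` with image exactly `B`. -/
def injImageEquiv {j : ℕ} {α : Type*} [DecidableEq α] (B : Finset α) :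
    {f : Fin j → α // Injective f ∧ Finset.image f Finset.univ = B} ≃
      {h : Fin j → {x : α // x ∈ B} // Injective h ∧ Surjective h} where
  toFun f := ⟨fun i => ⟨f.1 i, by
      have : f.1 i ∈ Finset.image f.1 Finset.univ :=
        Finset.mem_image_of_mem _ (Finset.mem_univ i)
      rwa [f.2.2] at this⟩,
    ⟨fun i i' hii => f.2.1 (congrArg Subtype.val hii), by
      rintro ⟨x, hx⟩
      rw [← f.2.2] at hx
      rcases Finset.mem_image.1 hx with ⟨i, _, hi⟩
      exact ⟨i, Subtype.ext hi⟩⟩⟩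
  invFun h := ⟨fun i => (h.1 i).1,
    ⟨fun i i' hii => h.2.1 (Subtype.ext hii), by
      ext x
      simp only [Finset.mem_image, Finset.mem_univ, true_and]
      constructor
      · rintro ⟨i, rfl⟩; exact (h.1 i).2
      · intro hx
        rcases h.2.2 ⟨x, hx⟩ with ⟨i, hi⟩
        exact ⟨i, congrArg Subtype.val hi⟩⟩⟩
  left_inv f := rfl
  right_inv h := rfl

lemma card_inj_image_fiber {j : ℕ} {α : Type*} [Fintype α] [DecidableEq α] (B : Finset α) :
    Nat.card {f : Fin j → α // Injective f ∧ Finset.image f Finset.univ = B}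
      = if B.card = j then j ! else 0 := by
  classical
  rw [Nat.card_congr (injImageEquiv B)]
  by_cases hB : B.card = j
  · rw [if_pos hB]
    have e : {h : Fin j → {x : α // x ∈ B} // Injective h ∧ Surjective h} ≃
        (Fin j ↪ {x : α // x ∈ B}) := by
      refine (Equiv.subtypeEquivRight (fun h => ?_)).trans
        (Equiv.subtypeInjectiveEquivEmbedding (Fin j) {x : α // x ∈ B})
      constructor
      · exact And.left
      · intro hinj
        refine ⟨hinj, ?_⟩
        have hcard : Fintype.card (Fin j) = Fintype.card {x : α // x ∈ B} := by
          rw [Fintype.card_coe, Fintype.card_fin, hB]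
        exact (Fintype.bijective_iff_injective_and_card _).2 ⟨hinj, hcard⟩ |>.2
    rw [Nat.card_congr e, Nat.card_eq_fintype_card, Fintype.card_embedding_eq,
      Fintype.card_coe, Fintype.card_fin, hB, Nat.descFactorial_self]
  · rw [if_neg hB]
    haveI : IsEmpty {h : Fin j → {x : α // x ∈ B} // Injective h ∧ Surjective h} := by
      refine ⟨fun h => hB ?_⟩
      have := Fintype.card_of_bijective ⟨h.2.1, h.2.2⟩
      rw [Fintype.card_coe, Fintype.card_fin] at this
      omega
    exact Nat.card_of_isEmpty

/-- The abstract decomposition: functions grouped by their image. -/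
lemma core_decomp (α : Type*) [Fintype α] [DecidableEq α] (Q : Finset α → Prop) (q : ℕ) :
    Nat.card {f : Fin q → α // Q (Finset.image f Finset.univ)} =
      ∑ j ∈ Finset.range (q + 1), stirling2 q j *
        Nat.card {f : Fin j → α // Injective f ∧ Q (Finset.image f Finset.univ)} := by
  classical
  have hL : Nat.card {f : Fin q → α // Q (Finset.image f Finset.univ)}
      = ∑ B : Finset α, if Q B then B.card ! * stirling2 q B.card else 0 := by
    rw [nat_card_fiber_sum (fun f : Fin q → α => Finset.image f Finset.univ)
      (fun f => Q (Finset.image f Finset.univ))]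
    refine Finset.sum_congr rfl fun B _ => ?_
    by_cases hB : Q B
    · rw [if_pos hB, ← card_image_fiber B]
      exact Nat.card_congr (Equiv.subtypeEquivRight fun f =>
        ⟨And.right, fun h => ⟨h ▸ hB, h⟩⟩)
    · rw [if_neg hB]
      haveI : IsEmpty {f : Fin q → α //
          Q (Finset.image f Finset.univ) ∧ Finset.image f Finset.univ = B} :=
        ⟨fun f => hB (f.2.2 ▸ f.2.1)⟩
      exact Nat.card_of_isEmpty
  have hR : ∀ j, Nat.card {f : Fin j → α // Injective f ∧ Q (Finset.image f Finset.univ)}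
      = ∑ B : Finset α, if Q B then (if B.card = j then j ! else 0) else 0 := by
    intro j
    rw [nat_card_fiber_sum (fun f : Fin j → α => Finset.image f Finset.univ)
      (fun f => Injective f ∧ Q (Finset.image f Finset.univ))]
    refine Finset.sum_congr rfl fun B _ => ?_
    by_cases hB : Q B
    · rw [if_pos hB, ← card_inj_image_fiber B]
      refine Nat.card_congr (Equiv.subtypeEquivRight fun f => ?_)
      constructor
      · rintro ⟨⟨h1, _⟩, h3⟩; exact ⟨h1, h3⟩
      · rintro ⟨h1, h3⟩; exact ⟨⟨h1, h3 ▸ hB⟩, h3⟩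
    · rw [if_neg hB]
      haveI : IsEmpty {f : Fin j → α //
          (Injective f ∧ Q (Finset.image f Finset.univ)) ∧ Finset.image f Finset.univ = B} :=
        ⟨fun f => hB (f.2.2 ▸ f.2.1.2)⟩
      exact Nat.card_of_isEmpty
  rw [hL]
  simp_rw [hR, Finset.mul_sum]
  rw [Finset.sum_comm]
  refine Finset.sum_congr rfl fun B _ => ?_
  by_cases hB : Q B
  · simp only [if_pos hB, mul_ite, mul_zero]
    rw [Finset.sum_ite_eq (Finset.range (q + 1)) B.card
      (fun j => stirling2 q j * j !)]
    by_cases hc : B.card ≤ q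
    · rw [if_pos (Finset.mem_range.2 (by omega)), mul_comm]
    · rw [if_neg (by simp [Finset.mem_range]; omega),
        stirling2_eq_zero_of_lt (by omega), mul_zero]
  · simp [hB]

/-- Bound on the ground set: a cover by `m` sets of size `p` needs `n ≤ p * m`. -/
lemma ground_bound {p m n : ℕ} (G : Fin m → Finset (Fin n))
    (hcard : ∀ i, (G i).card = p) (hcover : ∀ v, ∃ i, v ∈ G i) : n ≤ p * m := by
  classical
  have hsub : (Finset.univ : Finset (Fin n)) ⊆ Finset.univ.biUnion G := by
    intro v _
    obtain ⟨i, hi⟩ := hcover v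
    exact Finset.mem_biUnion.2 ⟨i, Finset.mem_univ i, hi⟩
  calc n = (Finset.univ : Finset (Fin n)).card := by simp
    _ ≤ (Finset.univ.biUnion G).card := Finset.card_le_card hsub
    _ ≤ ∑ i, (G i).card := Finset.card_biUnion_le
    _ = ∑ _i : Fin m, p := by simp [hcard]
    _ = p * m := by simp [mul_comm]

/-- Counting a sigma set over `ℕ` with uniformly bounded support. -/
lemma sigma_ncard (T : ℕ → Type*) [∀ n, Fintype (T n)] (P : ∀ n, T n → Prop) (N : ℕ)
    (h : ∀ n y, P n y → n ≤ N) :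
    Set.ncard {x : (n : ℕ) × T n | P x.1 x.2}
      = ∑ n ∈ Finset.range (N + 1), Nat.card {y : T n // P n y} := by
  classical
  have e : {x : (n : ℕ) × T n | P x.1 x.2} ≃ Σ n : Fin (N + 1), {y : T n // P n y} :=
    { toFun := fun x => ⟨⟨x.1.1, Nat.lt_succ_of_le (h _ _ x.2)⟩, ⟨x.1.2, x.2⟩⟩
      invFun := fun x => ⟨⟨x.1.1, x.2.1⟩, x.2.2⟩
      left_inv := fun x => rfl
      right_inv := fun x => rfl }
  rw [← Nat.card_coe_set_eq, Nat.card_congr e, Nat.card_eq_fintype_card,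
    Fintype.card_sigma, ← Fin.sum_univ_eq_sum_range]
  exact Finset.sum_congr rfl fun n _ => (Nat.card_eq_fintype_card).symm

/-- Alignments with `m` columns correspond to sequences of subsets of `Fin m`. -/
def alignEquiv (p q m : ℕ) :
    {M : Fin q → Fin m → Bool //
        (∀ r, (Finset.univ.filter (fun c => M r c = true)).card = p) ∧
        ∀ c, ∃ r, M r c = true} ≃
      {G : Fin q → Finset (Fin m) // (∀ i, (G i).card = p) ∧ ∀ v, ∃ i, v ∈ G i} where
  toFun M := ⟨fun r => Finset.univ.filter (fun c => M.1 r c = true),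
    ⟨M.2.1, fun v => by
      obtain ⟨r, hr⟩ := M.2.2 v
      exact ⟨r, Finset.mem_filter.2 ⟨Finset.mem_univ v, hr⟩⟩⟩⟩
  invFun G := ⟨fun r c => decide (c ∈ G.1 r),
    ⟨fun r => by
        have : (Finset.univ.filter (fun c => decide (c ∈ G.1 r) = true)) = G.1 r := by
          ext c; simp
        rw [this]; exact G.2.1 r,
      fun c => by
        obtain ⟨i, hi⟩ := G.2.2 c
        exact ⟨i, by simp [hi]⟩⟩⟩
  left_inv M := by
    apply Subtype.ext
    funext r c
    simp
  right_inv G := by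
    apply Subtype.ext
    funext r
    ext c
    simp

/-- The per-`n` key identity. -/
lemma keyA (p q n : ℕ) :
    Nat.card {G : Fin q → Finset (Fin n) // (∀ i, (G i).card = p) ∧ ∀ v, ∃ i, v ∈ G i} =
      ∑ j ∈ Finset.range (q + 1), stirling2 q j *
        Nat.card {G : Fin j → Finset (Fin n) //
          Injective G ∧ (∀ i, (G i).card = p) ∧ ∀ v, ∃ i, v ∈ G i} := by
  classical
  set Q : Finset (Finset (Fin n)) → Prop :=
    fun B => (∀ s ∈ B, s.card = p) ∧ ∀ v, ∃ s ∈ B, v ∈ s with hQdef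
  have hQ : ∀ (m : ℕ) (G : Fin m → Finset (Fin n)),
      ((∀ i, (G i).card = p) ∧ ∀ v, ∃ i, v ∈ G i) ↔ Q (Finset.image G Finset.univ) := by
    intro m G
    simp only [hQdef, Finset.mem_image, Finset.mem_univ, true_and]
    constructor
    · rintro ⟨h1, h2⟩
      refine ⟨?_, fun v => ?_⟩
      · rintro s ⟨i, rfl⟩; exact h1 i
      · obtain ⟨i, hi⟩ := h2 v
        exact ⟨G i, ⟨i, rfl⟩, hi⟩
    · rintro ⟨h1, h2⟩
      refine ⟨fun i => h1 _ ⟨i, rfl⟩, fun v => ?_⟩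
      obtain ⟨s, ⟨i, rfl⟩, hv⟩ := h2 v
      exact ⟨i, hv⟩
  have h1 := core_decomp (Finset (Fin n)) Q q
  rw [Nat.card_congr (Equiv.subtypeEquivRight (fun G => hQ q G)), h1]
  refine Finset.sum_congr rfl fun j _ => ?_
  congr 1
  exact Nat.card_congr (Equiv.subtypeEquivRight (fun G =>
    and_congr_right fun _ => (hQ j G).symm))

/-- `f(p,q) = ∑_{j=0}^{q} S(q,j) · t(p,j)`. -/
theorem stmt18 (p q : ℕ) :
    numAlignments p q =
      ∑ j ∈ Finset.range (q + 1), stirling2 q j * numLabeledPure p j := by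
  classical
  have hA : numAlignments p q = ∑ m ∈ Finset.range (p * q + 1),
      Nat.card {M : Fin q → Fin m → Bool //
        (∀ r, (Finset.univ.filter (fun c => M r c = true)).card = p) ∧
        ∀ c, ∃ r, M r c = true} := by
    refine sigma_ncard (fun m => Fin q → Fin m → Bool)
      (fun m M => (∀ r, (Finset.univ.filter (fun c => M r c = true)).card = p) ∧
        ∀ c, ∃ r, M r c = true) (p * q) ?_
    intro m M hM
    exact ground_bound (fun r => Finset.univ.filter (fun c => M r c = true)) hM.1
      (fun c => by
        obtain ⟨r, hr⟩ := hM.2 c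
        exact ⟨r, Finset.mem_filter.2 ⟨Finset.mem_univ c, hr⟩⟩)
  have hT : ∀ j, j ≤ q → numLabeledPure p j = ∑ n ∈ Finset.range (p * q + 1),
      Nat.card {G : Fin j → Finset (Fin n) //
        Injective G ∧ (∀ i, (G i).card = p) ∧ ∀ v, ∃ i, v ∈ G i} := by
    intro j hj
    refine sigma_ncard (fun n => Fin j → Finset (Fin n))
      (fun n G => Injective G ∧ (∀ i, (G i).card = p) ∧ ∀ v, ∃ i, v ∈ G i) (p * q) ?_
    intro n G hG
    exact le_trans (ground_bound G hG.2.1 hG.2.2) (Nat.mul_le_mul_left p hj)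
  rw [hA]
  have step : ∀ m, Nat.card {M : Fin q → Fin m → Bool //
        (∀ r, (Finset.univ.filter (fun c => M r c = true)).card = p) ∧
        ∀ c, ∃ r, M r c = true}
      = ∑ j ∈ Finset.range (q + 1), stirling2 q j *
          Nat.card {G : Fin j → Finset (Fin m) //
            Injective G ∧ (∀ i, (G i).card = p) ∧ ∀ v, ∃ i, v ∈ G i} := by
    intro m
    rw [Nat.card_congr (alignEquiv p q m)]
    exact keyA p q m
  simp_rw [step]
  rw [Finset.sum_comm]
  refine Finset.sum_congr rfl fun j hj => ?_
  rw [hT j (Nat.lt_succ_iff.1 (Finset.mem_range.1 hj)), Finset.mul_sum]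
end
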